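/- arXiv:1607.05210 — 4 statements merged into one kernel-verified Lean document; each statement's English description precedes it below -/
import Mathlib

section
/- For a finite multiset of vectors S in a Hilbert space V with POD modes φ_1,...,φ_{|S|} and singular values σ_1 ≥ ... ≥ σ_{|S|}, the span V_N of the first N POD modes satisfies ∑_{s∈S} ‖s − P_{V_N}(s)‖² = ∑_{m=N+1}^{|S|} σ_m², where P_{V_N} is the orthogonal projection onto V_N. -/
open Finset

/-! Expanding each snapshot in the orthonormal POD modes, `s m = ∑ⱼ σⱼ λⱼ(m) φⱼ`, the part with
`j < N` lies in `V_N` and the part with `j ≥ N` is orthogonal to it, so the projection error of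
`s m` is the tail `∑_{j ≥ N} σⱼ λⱼ(m) φⱼ`, of squared norm `∑_{j ≥ N} σⱼ² λⱼ(m)²`. Summing over `m`
and using `‖λⱼ‖ = 1` gives `∑_{j ≥ N} σⱼ²`. -/

section Orthonormal

variable {ι V : Type*} [NormedAddCommGroup V] [InnerProductSpace ℝ V] {φ : ι → V}

theorem Orthonormal.norm_sum_smul_sq (hφ : Orthonormal ℝ φ) (c : ι → ℝ) (t : Finset ι) :
    ‖∑ j ∈ t, c j • φ j‖ ^ 2 = ∑ j ∈ t, c j ^ 2 := by
  rw [← real_inner_self_eq_norm_sq, hφ.inner_sum]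
  simp only [conj_trivial, sq]

theorem Orthonormal.sum_smul_mem_orthogonal_span (hφ : Orthonormal ℝ φ) {T : Set ι}
    (c : ι → ℝ) {t : Finset ι} (ht : ∀ j ∈ t, j ∉ T) :
    ∑ j ∈ t, c j • φ j ∈ (Submodule.span ℝ (φ '' T))ᗮ := by
  refine Submodule.sum_mem _ fun j hj => Submodule.smul_mem _ _ ?_
  have hortho : Submodule.span ℝ {φ j} ⟂ Submodule.span ℝ (φ '' T) := by
    rw [Submodule.isOrtho_span]
    rintro _ rfl _ ⟨i, hi, rfl⟩
    exact hφ.inner_eq_zero (ne_of_mem_of_not_mem hi (ht j hj)).symm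
  exact hortho (Submodule.mem_span_singleton_self _)

theorem Orthonormal.sum_smul_sub_starProjection_span [Fintype ι] (hφ : Orthonormal ℝ φ)
    (T : Set ι) [DecidablePred (· ∈ T)] [(Submodule.span ℝ (φ '' T)).HasOrthogonalProjection]
    (c : ι → ℝ) :
    ∑ j, c j • φ j - (Submodule.span ℝ (φ '' T)).starProjection (∑ j, c j • φ j)
      = ∑ j with j ∉ T, c j • φ j := by
  have hsplit := (sum_filter_add_sum_filter_not univ (· ∈ T) fun j => c j • φ j).symm
  have hmem : ∑ j with j ∈ T, c j • φ j ∈ Submodule.span ℝ (φ '' T) :=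
    Submodule.sum_mem _ fun j hj => Submodule.smul_mem _ _
      (Submodule.subset_span (Set.mem_image_of_mem φ (mem_filter.1 hj).2))
  have horth := hφ.sum_smul_mem_orthogonal_span c (t := {j | j ∉ T})
    fun j hj => (mem_filter.1 hj).2
  rw [Submodule.eq_starProjection_of_mem_orthogonal' hmem horth hsplit]
  exact sub_eq_of_eq_add' hsplit

end Orthonormal

theorem EuclideanSpace.sum_mul_apply_sq {n : Type*} [Fintype n] (a : ℝ)
    (v : EuclideanSpace ℝ n) : ∑ m, (a * v m) ^ 2 = a ^ 2 * ‖v‖ ^ 2 := by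
  simp only [EuclideanSpace.real_norm_sq_eq, mul_sum, mul_pow]

theorem pod_projection_error_general
    {V : Type*} [NormedAddCommGroup V] [InnerProductSpace ℝ V] [FiniteDimensional ℝ V]
    {k : ℕ} (N : ℕ) (hN : N ≤ k)
    (s : Fin k → V) (σ : Fin k → ℝ) (φ : Fin k → V)
    (lam : Fin k → EuclideanSpace ℝ (Fin k))
    (hφ : Orthonormal ℝ φ) (hlam : Orthonormal ℝ lam)
    (hs : ∀ m, s m = ∑ j, (σ j * lam j m) • φ j) :
    ∑ m, ‖s m - (Submodule.orthogonalProjectionOnto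
        (Submodule.span ℝ (Set.range fun n : Fin N => φ (Fin.castLE hN n))) (s m) : V)‖ ^ 2
      = ∑ j ∈ univ.filter fun j : Fin k => N ≤ (j : ℕ), σ j ^ 2 := by
  have hrange : (Set.range fun n : Fin N => φ (Fin.castLE hN n)) = φ '' {j | (j : ℕ) < N} := by
    rw [← Fin.range_castLE hN, ← Set.range_comp]; rfl
  simp only [hrange, Submodule.coe_orthogonalProjectionOnto_apply, hs,
    hφ.sum_smul_sub_starProjection_span, hφ.norm_sum_smul_sq]
  rw [sum_comm]
  refine sum_congr (by ext; simp) fun j _ => ?_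
  rw [EuclideanSpace.sum_mul_apply_sq, hlam.norm_eq_one, one_pow, mul_one]

/-- POD error identity: the squared ℓ²-error of projecting the snapshots onto the
span of the first `N` POD modes equals the sum of the squared singular values with index ≥ N. -/
theorem pod_projection_error
    {V : Type*} [NormedAddCommGroup V] [InnerProductSpace ℝ V] [FiniteDimensional ℝ V]
    {k : ℕ} (N : ℕ) (hN : N ≤ k)
    (s : Fin k → V) (σ : Fin k → ℝ) (φ : Fin k → V)
    (lam : Fin k → EuclideanSpace ℝ (Fin k))
    (hσa : Antitone σ) (hσ0 : ∀ j, 0 ≤ σ j)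
    (hφ : Orthonormal ℝ φ) (hlam : Orthonormal ℝ lam)
    (hs : ∀ m, s m = ∑ j, (σ j * lam j m) • φ j) :
    ∑ m, ‖s m - (Submodule.orthogonalProjectionOnto
        (Submodule.span ℝ (Set.range fun n : Fin N => φ (Fin.castLE hN n))) (s m) : V)‖ ^ 2
      = ∑ j ∈ univ.filter fun j : Fin k => N ≤ (j : ℕ), σ j ^ 2 :=
  pod_projection_error_general N hN s σ φ lam hφ hlam hs
end

section
/- (Schmidt–Eckart–Young–Mirsky, subspace form) For a finite family of vectors S in a Hilbert space V and any N, the span of the first N POD modes minimizes ∑_{s∈S} ‖s − P_X(s)‖² over all N-dimensional subspaces X of V, and the minimum equals the sum of the squares of the singular values with index greater than N. -/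
/-!
Write `s m = ∑ j, σ j * lam j m • φ j`. Because the `lam j` are orthonormal, every linear map `T`
satisfies `∑ m, ‖T (s m)‖² = ∑ j, σ j² * ‖T (φ j)‖²`; for `T = P_{Xᗮ}` this expresses the error
of `X` as `∑ j, σ j² * d j` with weights `d j = ‖P_{Xᗮ} (φ j)‖² ∈ [0, 1]`. For the span of the
first `N` modes, `d j` is the indicator of `N ≤ j`. For an arbitrary `N`-dimensional `X`, Bessel's
inequality in an orthonormal basis of `X` gives `∑ j, (1 - d j) ≤ N`, and since `σ j²` decreases,
comparing every term with the threshold `σ N²` shows `∑ j, σ j² * d j ≥ ∑_{N ≤ j} σ j²`.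
-/

open Finset RealInnerProductSpace

theorem sum_le_sum_mul_of_threshold {ι : Type*} [Fintype ι] (M : Finset ι)
    {a d : ι → ℝ} {t : ℝ} (ht : 0 ≤ t) (haM : ∀ j ∈ M, a j ≤ t) (haMc : ∀ j ∉ M, t ≤ a j)
    (hd0 : ∀ j, 0 ≤ d j) (hd1 : ∀ j, d j ≤ 1) (hd : (#M : ℝ) ≤ ∑ j, d j) :
    ∑ j ∈ M, a j ≤ ∑ j, a j * d j := by
  classical
  have hterm : ∀ j, 0 ≤ (a j - t) * (d j - if j ∈ M then 1 else 0) := by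
    intro j
    by_cases hj : j ∈ M
    · rw [if_pos hj]
      exact mul_nonneg_of_nonpos_of_nonpos (by linarith [haM j hj]) (by linarith [hd1 j])
    · rw [if_neg hj, sub_zero]
      exact mul_nonneg (by linarith [haMc j hj]) (hd0 j)
  have hexpand : ∑ j, (a j - t) * (d j - if j ∈ M then 1 else 0)
      = ∑ j, a j * d j - ∑ j ∈ M, a j - t * (∑ j, d j - #M) := by
    simp only [mul_sub, sub_mul, sum_sub_distrib, mul_ite, mul_one, mul_zero, sum_ite_mem,
      univ_inter, ← mul_sum, sum_const, nsmul_eq_mul]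
    ring
  have hsum := sum_nonneg fun j (_ : j ∈ univ) => hterm j
  rw [hexpand] at hsum
  linarith [mul_nonneg ht (sub_nonneg.2 hd)]

theorem sum_filter_le_le_sum_mul_of_antitone {k N : ℕ} (hN : N ≤ k) {a d : Fin k → ℝ}
    (ha : Antitone a) (ha0 : ∀ j, 0 ≤ a j) (hd0 : ∀ j, 0 ≤ d j) (hd1 : ∀ j, d j ≤ 1)
    (hd : (k - N : ℝ) ≤ ∑ j, d j) :
    ∑ j ∈ univ.filter (fun j : Fin k => N ≤ (j : ℕ)), a j ≤ ∑ j, a j * d j := by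
  rcases hN.lt_or_eq with hlt | rfl
  · have hM : univ.filter (fun j : Fin k => N ≤ (j : ℕ)) = Ici ⟨N, hlt⟩ := by
      ext j; simp [Fin.le_def]
    rw [hM]
    refine sum_le_sum_mul_of_threshold _ (ha0 _) (fun j hj => ha (mem_Ici.1 hj))
      (fun j hj => ha (not_le.1 (mt mem_Ici.2 hj)).le) hd0 hd1 ?_
    rwa [Fin.card_Ici, Nat.cast_sub hN]
  · rw [filter_false_of_mem fun j _ => not_le.2 j.2, sum_empty]
    exact sum_nonneg fun j _ => mul_nonneg (ha0 j) (hd0 j)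

section InnerProductSpace

variable {E F : Type*} [NormedAddCommGroup E] [InnerProductSpace ℝ E]
  [NormedAddCommGroup F] [InnerProductSpace ℝ F]

theorem Orthonormal.sum_norm_sq_sum_smul {ι κ : Type*} [Fintype ι] [Fintype κ]
    {lam : ι → EuclideanSpace ℝ κ} (hlam : Orthonormal ℝ lam) (v : ι → E) :
    ∑ m, ‖∑ j, lam j m • v j‖ ^ 2 = ∑ j, ‖v j‖ ^ 2 := by
  classical
  have hcoord : ∀ i j, ∑ m, lam i m * lam j m = if i = j then 1 else 0 := fun i j => by
    rw [← orthonormal_iff_ite.1 hlam i j, PiLp.inner_apply]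
    exact sum_congr rfl fun m _ => by simp [mul_comm]
  calc ∑ m, ‖∑ j, lam j m • v j‖ ^ 2
      = ∑ i, ∑ j, (∑ m, lam i m * lam j m) * ⟪v i, v j⟫ := by
        simp only [← real_inner_self_eq_norm_sq, sum_inner, inner_sum, real_inner_smul_left,
          real_inner_smul_right, sum_mul]
        rw [sum_comm]
        refine sum_congr rfl fun i _ => ?_
        rw [sum_comm]
        exact sum_congr rfl fun j _ => sum_congr rfl fun m _ => by
          rw [real_inner_comm (v i)]; ring
    _ = ∑ j, ‖v j‖ ^ 2 := by simp [hcoord]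

theorem Orthonormal.mem_orthogonal_span_range_of_notMem {ι κ : Type*} {φ : ι → E}
    (hφ : Orthonormal ℝ φ) {f : κ → ι} {j : ι} (hj : j ∉ Set.range f) :
    φ j ∈ (Submodule.span ℝ (Set.range fun n => φ (f n)))ᗮ := by
  refine Submodule.isOrtho_iff_le.1 (Submodule.isOrtho_span.2 ?_)
    (Submodule.mem_span_singleton_self _)
  rintro _ rfl _ ⟨n, rfl⟩
  exact hφ.2 fun h => hj ⟨n, h.symm⟩

theorem Orthonormal.sum_norm_sq_starProjection_le_finrank {ι : Type*} [Fintype ι] {φ : ι → E}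
    (hφ : Orthonormal ℝ φ) (X : Submodule ℝ E) [FiniteDimensional ℝ X] :
    ∑ j, ‖X.starProjection (φ j)‖ ^ 2 ≤ Module.finrank ℝ X := by
  let b := stdOrthonormalBasis ℝ X
  have hparseval : ∀ j, ‖X.starProjection (φ j)‖ ^ 2 = ∑ i, ⟪φ j, (b i : E)⟫ ^ 2 := fun j => by
    rw [Submodule.starProjection_apply, Submodule.norm_coe, ← b.sum_sq_inner_right]
    simp only [Submodule.inner_orthogonalProjectionOnto_eq_of_mem_left, real_inner_comm]
  have hbessel : ∀ i, ∑ j, ⟪φ j, (b i : E)⟫ ^ 2 ≤ 1 := fun i => by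
    simpa [Submodule.norm_coe, b.orthonormal.1 i]
      using hφ.sum_inner_products_le (b i : E) (s := univ)
  calc ∑ j, ‖X.starProjection (φ j)‖ ^ 2 = ∑ i, ∑ j, ⟪φ j, (b i : E)⟫ ^ 2 := by
        simp only [hparseval]; exact sum_comm
    _ ≤ ∑ _i, 1 := sum_le_sum fun i _ => hbessel i
    _ = Module.finrank ℝ X := by simp

theorem sum_norm_sq_map_eq {ι κ : Type*} [Fintype ι] [Fintype κ] {s : κ → E} {σ : ι → ℝ}
    {φ : ι → E} {lam : ι → EuclideanSpace ℝ κ} (hlam : Orthonormal ℝ lam)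
    (hs : ∀ m, s m = ∑ j, (σ j * lam j m) • φ j) (T : E →L[ℝ] F) :
    ∑ m, ‖T (s m)‖ ^ 2 = ∑ j, σ j ^ 2 * ‖T (φ j)‖ ^ 2 := by
  have hTs : ∀ m, T (s m) = ∑ j, lam j m • σ j • T (φ j) := fun m => by
    simp only [hs, map_sum, map_smul, smul_smul, mul_comm]
  simp only [hTs, hlam.sum_norm_sq_sum_smul, norm_smul, mul_pow, Real.norm_eq_abs, sq_abs]

theorem Orthonormal.card_sub_finrank_le_sum_norm_sq_starProjection_orthogonal {ι : Type*}
    [Fintype ι] {φ : ι → E} (hφ : Orthonormal ℝ φ) (X : Submodule ℝ E) [FiniteDimensional ℝ X] :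
    (Fintype.card ι - Module.finrank ℝ X : ℝ) ≤ ∑ j, ‖Xᗮ.starProjection (φ j)‖ ^ 2 := by
  have hpyth : ∀ j, ‖Xᗮ.starProjection (φ j)‖ ^ 2 = 1 - ‖X.starProjection (φ j)‖ ^ 2 := fun j => by
    rw [eq_sub_iff_add_eq', ← Submodule.norm_sq_eq_add_norm_sq_starProjection, hφ.1 j, one_pow]
  simp only [hpyth, sum_sub_distrib, sum_const, card_univ, nsmul_one]
  linarith [hφ.sum_norm_sq_starProjection_le_finrank X]

end InnerProductSpace

/-- Schmidt–Eckart–Young–Mirsky, subspace form: the span of the first `N` POD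
modes minimizes the squared ℓ²-projection error over all `N`-dimensional subspaces, and the
minimum equals the sum of the squared singular values with index > N. -/
theorem schmidt_eckart_young_mirsky
    {V : Type*} [NormedAddCommGroup V] [InnerProductSpace ℝ V] [FiniteDimensional ℝ V]
    {k : ℕ} (N : ℕ) (hN : N ≤ k)
    (s : Fin k → V) (σ : Fin k → ℝ) (φ : Fin k → V)
    (lam : Fin k → EuclideanSpace ℝ (Fin k))
    (hσa : Antitone σ) (hσ0 : ∀ j, 0 ≤ σ j)
    (hφ : Orthonormal ℝ φ) (hlam : Orthonormal ℝ lam)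
    (hs : ∀ m, s m = ∑ j, (σ j * lam j m) • φ j) :
    (∑ m, ‖s m - (Submodule.orthogonalProjection
        (Submodule.span ℝ (Set.range fun n : Fin N => φ (Fin.castLE hN n))) (s m) : V)‖ ^ 2
      = ∑ j ∈ univ.filter fun j : Fin k => N ≤ (j : ℕ), σ j ^ 2)
    ∧ ∀ X : Submodule ℝ V, Module.finrank ℝ X = N →
        (∑ j ∈ univ.filter fun j : Fin k => N ≤ (j : ℕ), σ j ^ 2)
          ≤ ∑ m, ‖s m - (Submodule.orthogonalProjection X (s m) : V)‖ ^ 2 := by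
  have herr : ∀ X : Submodule ℝ V, ∑ m, ‖s m - X.starProjection (s m)‖ ^ 2
      = ∑ j, σ j ^ 2 * ‖Xᗮ.starProjection (φ j)‖ ^ 2 := fun X => by
    simpa only [Submodule.starProjection_orthogonal_val]
      using sum_norm_sq_map_eq hlam hs Xᗮ.starProjection
  simp only [Submodule.coe_orthogonalProjectionOnto_apply, herr]
  refine ⟨?_, fun X hX => ?_⟩
  · set K := Submodule.span ℝ (Set.range fun n : Fin N => φ (Fin.castLE hN n))
    rw [sum_filter]
    refine sum_congr rfl fun j _ => ?_
    by_cases hj : N ≤ (j : ℕ)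
    · have hmem : φ j ∈ Kᗮ :=
        hφ.mem_orthogonal_span_range_of_notMem (by simpa [Fin.range_castLE] using hj)
      rw [if_pos hj, Submodule.starProjection_eq_self_iff.2 hmem, hφ.1 j, one_pow, mul_one]
    · have hmem : φ j ∈ K := Submodule.subset_span ⟨⟨j, not_le.1 hj⟩, rfl⟩
      rw [if_neg hj, Submodule.starProjection_orthogonal_apply_eq_zero hmem, norm_zero]
      ring
  · refine sum_filter_le_le_sum_mul_of_antitone hN
      (fun i j hij => pow_le_pow_left₀ (hσ0 j) (hσa hij) 2) (fun j => sq_nonneg _)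
      (fun j => sq_nonneg _) (fun j => ?_) ?_
    · exact pow_le_one₀ (norm_nonneg _)
        ((Submodule.norm_starProjection_apply_le _ _).trans_eq (hφ.1 j))
    · simpa [hX] using hφ.card_sub_finrank_le_sum_norm_sq_starProjection_orthogonal X
end

section
/- (Two-level distributed HAPOD mode bound) In the setting of the two-level distributed HAPOD with partition S = S_1 ⊎ ... ⊎ S_r, local tolerances ε_i and root tolerance ε_ρ, the number of final HAPOD modes is at most the number of modes retained by a direct POD of the full family S with tolerance ε_ρ, i.e., |HAPOD output| ≤ min{ N : ∑_{m>N} σ_m(S)² ≤ ε_ρ² }, where σ_m(S) are the singular values of the full snapshot map. -/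
/-!
Write `E_q(u) = ∑_c ⟪u, q_c⟫²` for the energy of a snapshot family `q` along `u`, the quadratic
form of its Gram operator. Dropping local modes only drops nonnegative terms, so the retained
scaled local modes `Q` satisfy `E_Q ≤ E_S`. Hence `Q` lies in the span of the left singular
vectors `φS` of `S`, and with the weights `w_j = ∑_{t<n} ⟪φS_t, Φ_j⟫² ∈ [0, 1]`, which sum to at
most `n`,
  `∑_{j≥n} τ_j² ≤ ∑_j τ_j² (1 - w_j) = ∑_{t≥n} E_Q(φS_t) ≤ ∑_{t≥n} E_S(φS_t) = ∑_{t≥n} σS_t²`,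
the first step because `τ` is decreasing. Every tail of `τ²` is thus dominated by the same tail
of `σS²`, and the minimal truncation ranks compare.
-/

open Finset RealInnerProductSpace

theorem filter_le_val_eq_empty {K n : ℕ} (h : K ≤ n) :
    univ.filter (fun j : Fin K => n ≤ (j : ℕ)) = ∅ :=
  filter_false_of_mem fun j _ => not_le.mpr (j.2.trans_le h)

theorem sum_filter_le_le_sum_mul_one_sub {K n : ℕ} {g w : Fin K → ℝ} (hg : Antitone g)
    (hg0 : ∀ j, 0 ≤ g j) (hw0 : ∀ j, 0 ≤ w j) (hw1 : ∀ j, w j ≤ 1)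
    (hw : ∑ j, w j ≤ n) :
    ∑ j ∈ univ.filter (fun j : Fin K => n ≤ (j : ℕ)), g j ≤ ∑ j, g j * (1 - w j) := by
  rcases lt_or_ge n K with hnK | hKn
  · set A := univ.filter (fun j : Fin K => (j : ℕ) < n)
    set B := univ.filter (fun j : Fin K => n ≤ (j : ℕ))
    have hsplit (f : Fin K → ℝ) : ∑ j, f j = ∑ j ∈ A, f j + ∑ j ∈ B, f j := by
      simpa [A, B, not_lt] using
        (sum_filter_add_sum_filter_not univ (fun j : Fin K => (j : ℕ) < n) f).symm
    have hcard : #A = n := by simpa [A, hnK.le] using Fin.card_filter_val_lt (n := K) (m := n)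
    -- compare both sides with the threshold value `g n`
    set c := g ⟨n, hnK⟩
    have hA : c * ∑ j ∈ A, (1 - w j) ≤ ∑ j ∈ A, g j * (1 - w j) := by
      rw [mul_sum]
      refine sum_le_sum fun j hj => mul_le_mul_of_nonneg_right ?_ (sub_nonneg.mpr (hw1 j))
      exact hg (Fin.mk_le_of_le_val (mem_filter.mp hj).2.le)
    have hB : ∑ j ∈ B, g j * w j ≤ c * ∑ j ∈ B, w j := by
      rw [mul_sum]
      refine sum_le_sum fun j hj => mul_le_mul_of_nonneg_right ?_ (hw0 j)
      exact hg (Fin.mk_le_of_le_val (mem_filter.mp hj).2)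
    have hc : c * ∑ j, w j ≤ c * n := mul_le_mul_of_nonneg_left hw (hg0 _)
    have hAw : ∑ j ∈ A, (1 - w j) = n - ∑ j ∈ A, w j := by simp [sum_sub_distrib, hcard]
    have hBsplit : ∑ j ∈ B, g j = ∑ j ∈ B, g j * (1 - w j) + ∑ j ∈ B, g j * w j := by
      rw [← sum_add_distrib]
      exact sum_congr rfl fun j _ => by ring
    rw [hAw] at hA
    rw [hsplit w] at hc
    rw [hsplit, hBsplit]
    linarith
  · rw [filter_le_val_eq_empty hKn, sum_empty]
    exact sum_nonneg fun j _ => mul_nonneg (hg0 j) (sub_nonneg.mpr (hw1 j))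

section

variable {V : Type*} [NormedAddCommGroup V] [InnerProductSpace ℝ V]

theorem Orthonormal.norm_sum_smul_sq_s10 {J : Type*} [Fintype J] {v : J → V} (hv : Orthonormal ℝ v)
    (a : J → ℝ) : ‖∑ j, a j • v j‖ ^ 2 = ∑ j, a j ^ 2 := by
  rw [← real_inner_self_eq_norm_sq, hv.inner_sum]
  simp [sq]

theorem Orthonormal.sum_sq_sum_mul_apply {J P : Type*} [Fintype J] [Fintype P]
    {μ : J → EuclideanSpace ℝ P} (hμ : Orthonormal ℝ μ) (g : J → ℝ) :
    ∑ p, (∑ j, g j * μ j p) ^ 2 = ∑ j, g j ^ 2 := by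
  rw [← hμ.norm_sum_smul_sq_s10, EuclideanSpace.norm_sq_eq]
  simp

theorem Orthonormal.sum_inner_sq_eq_norm_sq_of_mem_span {J : Type*} [Fintype J] {v : J → V}
    (hv : Orthonormal ℝ v) {x : V} (hx : x ∈ Submodule.span ℝ (Set.range v)) :
    ∑ t, ⟪v t, x⟫ ^ 2 = ‖x‖ ^ 2 := by
  obtain ⟨a, rfl⟩ := Submodule.mem_span_range_iff_exists_fun ℝ |>.mp hx
  simp only [hv.inner_right_fintype, hv.norm_sum_smul_sq_s10]

theorem Orthonormal.sum_inner_sq_le_one {J : Type*} {v : J → V} (hv : Orthonormal ℝ v)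
    (s : Finset J) {x : V} (hx : ‖x‖ = 1) : ∑ j ∈ s, ⟪v j, x⟫ ^ 2 ≤ 1 := by
  simpa [hx, Real.norm_eq_abs, sq_abs] using hv.sum_inner_products_le x (s := s)

/-- `‖qᵀ u‖²` for the synthesis map `q : ℝ^ι → V`; `energyAlong q ≤ energyAlong s` pointwise is
the Löwner order `q qᵀ ≤ s sᵀ` of the Gram operators. -/
def energyAlong {ι : Type*} [Fintype ι] (q : ι → V) (u : V) : ℝ := ∑ c, ⟪u, q c⟫ ^ 2

section SVD

variable {ι P : Type*} [Fintype ι] [Fintype P] {K : ℕ} {q : ι → V} (e : ι ≃ P)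
  {τ : Fin K → ℝ} {Φ : Fin K → V} {μ : Fin K → EuclideanSpace ℝ P}

theorem energyAlong_eq_of_svd (hμ : Orthonormal ℝ μ)
    (hq : ∀ c, q c = ∑ j, (τ j * μ j (e c)) • Φ j) (u : V) :
    energyAlong q u = ∑ j, (τ j * ⟪u, Φ j⟫) ^ 2 := by
  have hinner : ∀ c, ⟪u, q c⟫ = ∑ j, τ j * ⟪u, Φ j⟫ * μ j (e c) := fun c => by
    simp only [hq, inner_sum, real_inner_smul_right]
    exact sum_congr rfl fun j _ => by ring
  simp only [energyAlong, hinner]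
  rw [e.sum_comp (fun p => (∑ j, τ j * ⟪u, Φ j⟫ * μ j p) ^ 2), hμ.sum_sq_sum_mul_apply]

theorem sum_norm_sq_eq_of_svd (hΦ : Orthonormal ℝ Φ) (hμ : Orthonormal ℝ μ)
    (hq : ∀ c, q c = ∑ j, (τ j * μ j (e c)) • Φ j) :
    ∑ c, ‖q c‖ ^ 2 = ∑ j, τ j ^ 2 := by
  simp only [hq, hΦ.norm_sum_smul_sq_s10, mul_pow]
  rw [sum_comm]
  refine sum_congr rfl fun j _ => ?_
  rw [← mul_sum, e.sum_comp (fun p => μ j p ^ 2), ← EuclideanSpace.real_norm_sq_eq, hμ.1 j,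
    one_pow, mul_one]

end SVD

theorem mem_span_of_energyAlong_le {ι L : Type*} [Fintype ι] [Fintype L] {q : ι → V}
    {σ : L → ℝ} {ψ : L → V} (h : ∀ u, energyAlong q u ≤ ∑ t, (σ t * ⟪u, ψ t⟫) ^ 2)
    (c : ι) :
    q c ∈ Submodule.span ℝ (Set.range ψ) := by
  have : FiniteDimensional ℝ (Submodule.span ℝ (Set.range ψ)) :=
    FiniteDimensional.span_of_finite ℝ (Set.finite_range ψ)
  rw [← Submodule.orthogonal_orthogonal (Submodule.span ℝ (Set.range ψ))]
  intro u hu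
  have hψu : ∀ t, ⟪u, ψ t⟫ = 0 := fun t =>
    inner_eq_zero_symm.mp (hu _ (Submodule.subset_span ⟨t, rfl⟩))
  have hzero : energyAlong q u = 0 := by
    refine le_antisymm ?_ (sum_nonneg fun _ _ => sq_nonneg _)
    simpa [hψu] using h u
  exact pow_eq_zero_iff two_ne_zero |>.mp <|
    (sum_eq_zero_iff_of_nonneg fun _ _ => sq_nonneg _).mp hzero c (mem_univ c)

theorem sum_filter_sq_le_of_energyAlong_le {ι P : Type*} [Fintype ι] [Fintype P]
    {K M : ℕ} {q : ι → V} (e : ι ≃ P) {τ : Fin K → ℝ} {Φ : Fin K → V}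
    {μ : Fin K → EuclideanSpace ℝ P} (hτa : Antitone τ) (hτ0 : ∀ j, 0 ≤ τ j)
    (hΦ : Orthonormal ℝ Φ) (hμ : Orthonormal ℝ μ)
    (hq : ∀ c, q c = ∑ j, (τ j * μ j (e c)) • Φ j)
    {σ : Fin M → ℝ} {ψ : Fin M → V} (hψ : Orthonormal ℝ ψ)
    (h : ∀ u, energyAlong q u ≤ ∑ t, (σ t * ⟪u, ψ t⟫) ^ 2) (n : ℕ) :
    ∑ j ∈ univ.filter (fun j : Fin K => n ≤ (j : ℕ)), τ j ^ 2
      ≤ ∑ t ∈ univ.filter (fun t : Fin M => n ≤ (t : ℕ)), σ t ^ 2 := by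
  set A := univ.filter (fun t : Fin M => (t : ℕ) < n)
  set w : Fin K → ℝ := fun j => ∑ t ∈ A, ⟪ψ t, Φ j⟫ ^ 2
  have hw : ∑ j, w j ≤ n := calc
    ∑ j, w j = ∑ t ∈ A, ∑ j, ⟪Φ j, ψ t⟫ ^ 2 := by
      simp only [w, real_inner_comm (ψ _)]; exact sum_comm
    _ ≤ ∑ t ∈ A, (1 : ℝ) := sum_le_sum fun t _ => hΦ.sum_inner_sq_le_one _ (hψ.1 t)
    _ ≤ n := by
      simpa [A] using Fin.card_filter_val_lt (n := M) (m := n) |>.trans_le (min_le_right _ _)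
  have hE : ∀ t, energyAlong q (ψ t) = ∑ j, τ j ^ 2 * ⟪ψ t, Φ j⟫ ^ 2 := fun t => by
    simp only [energyAlong_eq_of_svd e hμ hq, mul_pow]
  have hσ : ∀ t, ∑ s, (σ s * ⟪ψ t, ψ s⟫) ^ 2 = σ t ^ 2 := fun t => by
    simp [orthonormal_iff_ite.mp hψ]
  have htotal : ∑ j, τ j ^ 2 = ∑ t, energyAlong q (ψ t) := by
    simp only [← sum_norm_sq_eq_of_svd e hΦ hμ hq, energyAlong]
    rw [sum_comm]
    exact sum_congr rfl fun c _ =>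
      (hψ.sum_inner_sq_eq_norm_sq_of_mem_span (mem_span_of_energyAlong_le h c)).symm
  calc ∑ j ∈ univ.filter (fun j : Fin K => n ≤ (j : ℕ)), τ j ^ 2
      ≤ ∑ j, τ j ^ 2 * (1 - w j) :=
        sum_filter_le_le_sum_mul_one_sub (fun a b hab => pow_le_pow_left₀ (hτ0 b) (hτa hab) 2)
          (fun j => sq_nonneg _) (fun j => sum_nonneg fun t _ => sq_nonneg _)
          (fun j => hψ.sum_inner_sq_le_one A (hΦ.1 j)) hw
    _ = ∑ t, energyAlong q (ψ t) - ∑ t ∈ A, energyAlong q (ψ t) := by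
        simp only [mul_sub, mul_one, sum_sub_distrib, htotal, hE, w, mul_sum]
        rw [sub_right_inj]
        exact sum_comm
    _ = ∑ t ∈ univ.filter (fun t : Fin M => n ≤ (t : ℕ)), energyAlong q (ψ t) := by
        rw [← sum_filter_add_sum_filter_not univ (fun t : Fin M => (t : ℕ) < n)]
        simp [A, not_lt]
    _ ≤ _ := sum_le_sum fun t _ => (h (ψ t)).trans_eq (hσ t)

theorem energyAlong_truncation_le {ι : Type*} [Fintype ι] {k N : ι → ℕ}
    (hN : ∀ i, N i ≤ k i) {s : ∀ i, Fin (k i) → V} {σ : ∀ i, Fin (k i) → ℝ}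
    {φ : ∀ i, Fin (k i) → V} {lam : ∀ i, Fin (k i) → EuclideanSpace ℝ (Fin (k i))}
    (hlam : ∀ i, Orthonormal ℝ (lam i))
    (hs : ∀ i m, s i m = ∑ j, (σ i j * lam i j m) • φ i j) (u : V) :
    energyAlong (fun c : (i : ι) × Fin (N i) =>
        σ c.1 (Fin.castLE (hN c.1) c.2) • φ c.1 (Fin.castLE (hN c.1) c.2)) u
      ≤ energyAlong (fun c : (i : ι) × Fin (k i) => s c.1 c.2) u := by
  simp only [energyAlong, Fintype.sum_sigma]
  refine sum_le_sum fun i _ => ?_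
  have hlocal := energyAlong_eq_of_svd (Equiv.refl _) (hlam i) (hs i) u
  simp only [energyAlong] at hlocal
  rw [hlocal]
  simpa only [real_inner_smul_right, sum_map, Fin.castLEEmb_apply] using
    sum_le_univ_sum_of_nonneg (s := univ.map (Fin.castLEEmb (hN i)))
      fun j => sq_nonneg (σ i j * ⟪u, φ i j⟫)

end

theorem distributed_hapod_mode_bound_general
    {V : Type*} [NormedAddCommGroup V] [InnerProductSpace ℝ V]
    {r : ℕ} (k N : Fin r → ℕ) (hN : ∀ i, N i ≤ k i)
    (s : ∀ i, Fin (k i) → V)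
    (σ : ∀ i, Fin (k i) → ℝ) (φ : ∀ i, Fin (k i) → V)
    (lam : ∀ i, Fin (k i) → EuclideanSpace ℝ (Fin (k i)))
    (hlam : ∀ i, Orthonormal ℝ (lam i))
    (hs : ∀ i m, s i m = ∑ j, (σ i j * lam i j m) • φ i j)
    -- SVD of the concatenation of the retained scaled local modes
    {K : ℕ} (e : ((i : Fin r) × Fin (N i)) ≃ Fin K)
    (τ : Fin K → ℝ) (Φ : Fin K → V) (μ : Fin K → EuclideanSpace ℝ (Fin K))
    (hτa : Antitone τ) (hτ0 : ∀ j, 0 ≤ τ j)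
    (hΦ : Orthonormal ℝ Φ) (hμ : Orthonormal ℝ μ)
    (hQ : ∀ i (n : Fin (N i)),
      σ i (Fin.castLE (hN i) n) • φ i (Fin.castLE (hN i) n)
        = ∑ jK, (τ jK * μ jK (e ⟨i, n⟩)) • Φ jK)
    -- SVD of the full snapshot map
    {Kt : ℕ} (e' : ((i : Fin r) × Fin (k i)) ≃ Fin Kt)
    (σS : Fin Kt → ℝ) (φS : Fin Kt → V) (lamS : Fin Kt → EuclideanSpace ℝ (Fin Kt))
    (hφS : Orthonormal ℝ φS) (hlamS : Orthonormal ℝ lamS)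
    (hsS : ∀ i m, s i m = ∑ j, (σS j * lamS j (e' ⟨i, m⟩)) • φS j)
    (ερ : ℝ) :
    sInf {n : ℕ | ∑ jK ∈ univ.filter (fun jK : Fin K => n ≤ (jK : ℕ)), τ jK ^ 2 ≤ ερ ^ 2}
      ≤ sInf {n : ℕ | ∑ j ∈ univ.filter (fun j : Fin Kt => n ≤ (j : ℕ)), σS j ^ 2 ≤ ερ ^ 2} := by
  have hgram (u : V) : energyAlong (fun c : (i : Fin r) × Fin (N i) =>
      σ c.1 (Fin.castLE (hN c.1) c.2) • φ c.1 (Fin.castLE (hN c.1) c.2)) u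
        ≤ ∑ t, (σS t * ⟪u, φS t⟫) ^ 2 :=
    (energyAlong_truncation_le hN hlam hs u).trans_eq
      (energyAlong_eq_of_svd e' hlamS (fun c => hsS c.1 c.2) u)
  have htail :=
    sum_filter_sq_le_of_energyAlong_le e hτa hτ0 hΦ hμ (fun c => hQ c.1 c.2) hφS hgram
  refine csInf_le_csInf (OrderBot.bddBelow _) ⟨Kt, ?_⟩ fun n hn => (htail n).trans hn
  simpa [filter_le_val_eq_empty le_rfl] using sq_nonneg ερ

/-- two-level distributed HAPOD mode bound: the number of final HAPOD modes
(the minimal `n` such that the tail of the singular values `τ` of the concatenated retained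
scaled local modes is at most `ερ²`) is at most the number of modes a direct POD of the
full snapshot family `S` with tolerance `ερ` would retain. -/
theorem distributed_hapod_mode_bound
    {V : Type*} [NormedAddCommGroup V] [InnerProductSpace ℝ V] [FiniteDimensional ℝ V]
    {r : ℕ} (k N : Fin r → ℕ) (hN : ∀ i, N i ≤ k i)
    (s : ∀ i, Fin (k i) → V)
    (σ : ∀ i, Fin (k i) → ℝ) (φ : ∀ i, Fin (k i) → V)
    (lam : ∀ i, Fin (k i) → EuclideanSpace ℝ (Fin (k i)))
    (hσa : ∀ i, Antitone (σ i)) (hσ0 : ∀ i j, 0 ≤ σ i j)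
    (hφ : ∀ i, Orthonormal ℝ (φ i)) (hlam : ∀ i, Orthonormal ℝ (lam i))
    (hs : ∀ i m, s i m = ∑ j, (σ i j * lam i j m) • φ i j)
    -- SVD of the concatenation of the retained scaled local modes
    {K : ℕ} (e : ((i : Fin r) × Fin (N i)) ≃ Fin K)
    (τ : Fin K → ℝ) (Φ : Fin K → V) (μ : Fin K → EuclideanSpace ℝ (Fin K))
    (hτa : Antitone τ) (hτ0 : ∀ j, 0 ≤ τ j)
    (hΦ : Orthonormal ℝ Φ) (hμ : Orthonormal ℝ μ)
    (hQ : ∀ i (n : Fin (N i)),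
      σ i (Fin.castLE (hN i) n) • φ i (Fin.castLE (hN i) n)
        = ∑ jK, (τ jK * μ jK (e ⟨i, n⟩)) • Φ jK)
    -- SVD of the full snapshot map
    {Kt : ℕ} (e' : ((i : Fin r) × Fin (k i)) ≃ Fin Kt)
    (σS : Fin Kt → ℝ) (φS : Fin Kt → V) (lamS : Fin Kt → EuclideanSpace ℝ (Fin Kt))
    (hσSa : Antitone σS) (hσS0 : ∀ j, 0 ≤ σS j)
    (hφS : Orthonormal ℝ φS) (hlamS : Orthonormal ℝ lamS)
    (hsS : ∀ i m, s i m = ∑ j, (σS j * lamS j (e' ⟨i, m⟩)) • φS j)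
    (ερ : ℝ) :
    sInf {n : ℕ | ∑ jK ∈ univ.filter (fun jK : Fin K => n ≤ (jK : ℕ)), τ jK ^ 2 ≤ ερ ^ 2}
      ≤ sInf {n : ℕ | ∑ j ∈ univ.filter (fun j : Fin Kt => n ≤ (j : ℕ)), σS j ^ 2 ≤ ερ ^ 2} :=
  distributed_hapod_mode_bound_general k N hN s σ φ lam hlam hs e τ Φ μ hτa hτ0 hΦ hμ hQ e' σS φS
    lamS hφS hlamS hsS ερ
end

section
/- Let A : ℝ^k → V be linear with singular values σ_1 ≥ σ_2 ≥ ..., and for ε > 0 define N(ε) = min{N : ∑_{m>N} σ_m² ≤ ε²}. If B : ℝ^j → V is another linear map such that for every orthogonal projection P on V one has ‖(1−P)∘A‖_HS² ≤ ‖(1−P)∘B‖_HS², then N_A(ε) ≤ N_B(ε) for all ε > 0. -/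
open Finset
open scoped RealInnerProductSpace

/-- Hilbert–Schmidt (Frobenius) inner product `⟨A, B⟩ = tr(A* B)`. -/
noncomputable def frobInner {W V : Type*}
    [NormedAddCommGroup W] [InnerProductSpace ℝ W] [FiniteDimensional ℝ W]
    [NormedAddCommGroup V] [InnerProductSpace ℝ V] [FiniteDimensional ℝ V]
    (A B : W →ₗ[ℝ] V) : ℝ :=
  LinearMap.trace ℝ W (LinearMap.adjoint A ∘ₗ B)

/-- Trace of an endomorphism via an orthonormal basis. -/
lemma trace_eq_sum_inner_onb {ι W : Type*} [Fintype ι] [DecidableEq ι]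
    [NormedAddCommGroup W] [InnerProductSpace ℝ W] [FiniteDimensional ℝ W]
    (b : OrthonormalBasis ι ℝ W) (f : W →ₗ[ℝ] W) :
    LinearMap.trace ℝ W f = ∑ i, ⟪b i, f (b i)⟫ := by
  rw [LinearMap.trace_eq_matrix_trace ℝ b.toBasis, Matrix.trace]
  simp only [Matrix.diag, LinearMap.toMatrix_apply, OrthonormalBasis.coe_toBasis,
    OrthonormalBasis.coe_toBasis_repr_apply, OrthonormalBasis.repr_apply_apply]

/-- `⟨C, C⟩_HS = ∑ ⟪C bᵢ, C bᵢ⟫` over an orthonormal basis of the domain. -/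
lemma frobInner_self_eq {ι W V : Type*} [Fintype ι] [DecidableEq ι]
    [NormedAddCommGroup W] [InnerProductSpace ℝ W] [FiniteDimensional ℝ W]
    [NormedAddCommGroup V] [InnerProductSpace ℝ V] [FiniteDimensional ℝ V]
    (b : OrthonormalBasis ι ℝ W) (C : W →ₗ[ℝ] V) :
    frobInner C C = ∑ i, ⟪C (b i), C (b i)⟫ := by
  rw [frobInner, trace_eq_sum_inner_onb b]
  simp [LinearMap.adjoint_inner_right]

lemma card_filter_lt_le (k N : ℕ) :
    (univ.filter (fun m : Fin k => (m : ℕ) < N)).card ≤ N := by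
  classical
  calc (univ.filter (fun m : Fin k => (m : ℕ) < N)).card ≤ (Finset.range N).card := by
        apply Finset.card_le_card_of_injOn Fin.val
        · intro m hm; simp at hm ⊢; exact hm
        · exact fun a _ b _ h => Fin.ext h
    _ = N := Finset.card_range N

lemma weight_sum_le {k N : ℕ} (c t : Fin k → ℝ) (hc : Antitone c) (hc0 : ∀ m, 0 ≤ c m)
    (ht0 : ∀ m, 0 ≤ t m) (ht1 : ∀ m, t m ≤ 1) (hts : ∑ m, t m ≤ (N : ℝ)) :
    ∑ m ∈ univ.filter (fun m : Fin k => N ≤ (m : ℕ)), c m ≤ ∑ m, c m * (1 - t m) := by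
  classical
  set L : Finset (Fin k) := univ.filter (fun m : Fin k => (m : ℕ) < N) with hL
  set G : Finset (Fin k) := univ.filter (fun m : Fin k => N ≤ (m : ℕ)) with hG
  have hGL : G = univ.filter (fun m : Fin k => ¬ (m : ℕ) < N) := by
    rw [hG]; ext m; simp [Nat.not_lt]
  have hsplit : ∀ f : Fin k → ℝ, ∑ m, f m = ∑ m ∈ L, f m + ∑ m ∈ G, f m := by
    intro f
    rw [hL, hGL]
    exact (Finset.sum_filter_add_sum_filter_not univ (fun m : Fin k => (m : ℕ) < N) f).symm
  have key : ∑ m ∈ G, c m * t m ≤ ∑ m ∈ L, c m * (1 - t m) := by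
    by_cases hN : N < k
    · set m₀ : Fin k := ⟨N, hN⟩ with hm0
      have hLmap : L = Finset.Iio m₀ := by
        ext m
        simp [hL, hm0, Fin.lt_def]
      have hcardL : L.card = N := by rw [hLmap, Fin.card_Iio]
      have h1 : ∑ m ∈ G, c m * t m ≤ c m₀ * ∑ m ∈ G, t m := by
        rw [Finset.mul_sum]
        apply Finset.sum_le_sum
        intro m hm
        have hmG : N ≤ (m : ℕ) := by simpa [hG] using hm
        have hcc : c m ≤ c m₀ := hc (by simp [hm0, Fin.le_def]; omega)
        exact mul_le_mul_of_nonneg_right hcc (ht0 m)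
      have h2 : ∑ m ∈ G, t m ≤ (N : ℝ) - ∑ m ∈ L, t m := by
        have := hsplit t
        linarith
      have h3 : c m₀ * ((N : ℝ) - ∑ m ∈ L, t m) = ∑ m ∈ L, c m₀ * (1 - t m) := by
        rw [← Finset.mul_sum, Finset.sum_sub_distrib, Finset.sum_const, nsmul_eq_mul, mul_one,
          hcardL]
      have h4 : ∑ m ∈ L, c m₀ * (1 - t m) ≤ ∑ m ∈ L, c m * (1 - t m) := by
        apply Finset.sum_le_sum
        intro m hm
        have hmL : (m : ℕ) < N := by simpa [hL] using hm
        have hcc : c m₀ ≤ c m := hc (by simp [hm0, Fin.le_def]; omega)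
        have h1t : 0 ≤ 1 - t m := by linarith [ht1 m]
        exact mul_le_mul_of_nonneg_right hcc h1t
      calc ∑ m ∈ G, c m * t m ≤ c m₀ * ∑ m ∈ G, t m := h1
        _ ≤ c m₀ * ((N : ℝ) - ∑ m ∈ L, t m) := mul_le_mul_of_nonneg_left h2 (hc0 m₀)
        _ = ∑ m ∈ L, c m₀ * (1 - t m) := h3
        _ ≤ ∑ m ∈ L, c m * (1 - t m) := h4
    · have hGempty : G = ∅ := by
        rw [hG]
        apply Finset.filter_false_of_mem
        intro m _
        have := m.isLt
        omega
      rw [hGempty]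
      simp only [Finset.sum_empty]
      apply Finset.sum_nonneg
      intro m _
      have := ht1 m
      have := hc0 m
      nlinarith
  have h5 : ∑ m ∈ G, c m = ∑ m ∈ G, c m * (1 - t m) + ∑ m ∈ G, c m * t m := by
    rw [← Finset.sum_add_distrib]
    apply Finset.sum_congr rfl
    intro m _; ring
  calc ∑ m ∈ G, c m = ∑ m ∈ G, c m * (1 - t m) + ∑ m ∈ G, c m * t m := h5
    _ ≤ ∑ m ∈ G, c m * (1 - t m) + ∑ m ∈ L, c m * (1 - t m) := by linarith [key]
    _ = ∑ m, c m * (1 - t m) := by rw [hsplit (fun m => c m * (1 - t m))]; ring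

/-- Tail comparison: the core estimate. -/
lemma tail_compare
    {V : Type*} [NormedAddCommGroup V] [InnerProductSpace ℝ V] [FiniteDimensional ℝ V]
    {k j : ℕ}
    (A : EuclideanSpace ℝ (Fin k) →ₗ[ℝ] V)
    (B : EuclideanSpace ℝ (Fin j) →ₗ[ℝ] V)
    (σA : Fin k → ℝ) (φA : Fin k → V) (lamA : Fin k → EuclideanSpace ℝ (Fin k))
    (hσAa : Antitone σA) (hσA0 : ∀ m, 0 ≤ σA m)
    (hφA : Orthonormal ℝ φA) (hlamA : Orthonormal ℝ lamA)
    (hA : ∀ x, A x = ∑ m, (σA m * ⟪lamA m, x⟫) • φA m)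
    (σB : Fin j → ℝ) (φB : Fin j → V) (lamB : Fin j → EuclideanSpace ℝ (Fin j))
    (hσB0 : ∀ m, 0 ≤ σB m)
    (hφB : Orthonormal ℝ φB) (hlamB : Orthonormal ℝ lamB)
    (hB : ∀ x, B x = ∑ x_1, (σB x_1 * ⟪lamB x_1, x⟫) • φB x_1)
    (hdom : ∀ P : V →ₗ[ℝ] V, P ∘ₗ P = P → LinearMap.adjoint P = P →
      frobInner (A - P ∘ₗ A) (A - P ∘ₗ A) ≤ frobInner (B - P ∘ₗ B) (B - P ∘ₗ B))
    (N : ℕ) :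
    ∑ m ∈ univ.filter (fun m : Fin k => N ≤ (m : ℕ)), σA m ^ 2
      ≤ ∑ m ∈ univ.filter (fun m : Fin j => N ≤ (m : ℕ)), σB m ^ 2 := by
  classical
  set S : Finset (Fin j) := univ.filter (fun i : Fin j => (i : ℕ) < N) with hS
  have hBo : ∀ i i' : Fin j, ⟪φB i, φB i'⟫ = if i = i' then (1 : ℝ) else 0 :=
    fun i i' => orthonormal_iff_ite.mp hφB i i'
  -- the projection
  set P : V →ₗ[ℝ] V :=
    { toFun := fun x => ∑ i ∈ S, ⟪φB i, x⟫ • φB i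
      map_add' := by
        intro x y
        simp [inner_add_right, add_smul, Finset.sum_add_distrib]
      map_smul' := by
        intro c x
        simp [inner_smul_right, smul_smul, Finset.smul_sum] } with hP
  have hPapply : ∀ x, P x = ∑ i ∈ S, ⟪φB i, x⟫ • φB i := fun x => rfl
  have hPφB : ∀ m : Fin j, P (φB m) = if m ∈ S then φB m else 0 := by
    intro m
    rw [hPapply]
    have : ∀ i ∈ S, (⟪φB i, φB m⟫ : ℝ) • φB i = if i = m then φB i else 0 := by
      intro i _
      rw [hBo]
      split_ifs <;> simp
    rw [Finset.sum_congr rfl this, Finset.sum_ite_eq' S m φB]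
  have hP2 : P ∘ₗ P = P := by
    apply LinearMap.ext
    intro x
    simp only [LinearMap.comp_apply]
    conv_lhs => rw [hPapply x]
    rw [map_sum]
    simp only [map_smul, hPφB]
    apply Finset.sum_congr rfl
    intro i hi
    rw [if_pos hi]
  have hPsa : LinearMap.adjoint P = P := by
    refine ((LinearMap.eq_adjoint_iff P P).mpr ?_).symm
    intro x y
    rw [hPapply x, hPapply y, sum_inner, inner_sum]
    apply Finset.sum_congr rfl
    intro i _
    rw [real_inner_smul_left, real_inner_smul_right]
    rw [real_inner_comm x (φB i)]
    ring
  -- ONBs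
  have hcardA : Fintype.card (Fin k) = Module.finrank ℝ (EuclideanSpace ℝ (Fin k)) := by simp
  have hcardB : Fintype.card (Fin j) = Module.finrank ℝ (EuclideanSpace ℝ (Fin j)) := by simp
  set bA : OrthonormalBasis (Fin k) ℝ (EuclideanSpace ℝ (Fin k)) :=
    OrthonormalBasis.mk hlamA
      (by rw [hlamA.linearIndependent.span_eq_top_of_card_eq_finrank' hcardA]) with hbA
  set bB : OrthonormalBasis (Fin j) ℝ (EuclideanSpace ℝ (Fin j)) :=
    OrthonormalBasis.mk hlamB
      (by rw [hlamB.linearIndependent.span_eq_top_of_card_eq_finrank' hcardB]) with hbB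
  have hAlam : ∀ m, A (bA m) = σA m • φA m := by
    intro m
    rw [hbA, OrthonormalBasis.coe_mk, hA]
    have hli := orthonormal_iff_ite.mp hlamA
    have h : ∀ m' ∈ (univ : Finset (Fin k)),
        (σA m' * ⟪lamA m', lamA m⟫) • φA m' = if m' = m then σA m' • φA m' else 0 := by
      intro m' _
      rw [hli]
      split_ifs <;> simp
    rw [Finset.sum_congr rfl h, Finset.sum_ite_eq' univ m (fun m' => σA m' • φA m')]
    simp
  have hBlam : ∀ m, B (bB m) = σB m • φB m := by
    intro m
    rw [hbB, OrthonormalBasis.coe_mk, hB]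
    have hli := orthonormal_iff_ite.mp hlamB
    have h : ∀ m' ∈ (univ : Finset (Fin j)),
        (σB m' * ⟪lamB m', lamB m⟫) • φB m' = if m' = m then σB m' • φB m' else 0 := by
      intro m' _
      rw [hli]
      split_ifs <;> simp
    rw [Finset.sum_congr rfl h, Finset.sum_ite_eq' univ m (fun m' => σB m' • φB m')]
    simp
  -- weights
  set tA : Fin k → ℝ := fun m => ∑ i ∈ S, ⟪φB i, φA m⟫ ^ 2 with htA
  have hinnerP : ∀ x : V, ⟪x, P x⟫ = ∑ i ∈ S, ⟪φB i, x⟫ ^ 2 := by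
    intro x
    rw [hPapply, inner_sum]
    apply Finset.sum_congr rfl
    intro i _
    rw [real_inner_smul_right, real_inner_comm x (φB i)]
    ring
  have hiP : ∀ x : V, ∀ i ∈ S, ⟪φB i, P x⟫ = ⟪φB i, x⟫ := by
    intro x i hi
    rw [hPapply, inner_sum]
    have h : ∀ i' ∈ S, (⟪φB i, ⟪φB i', x⟫ • φB i'⟫ : ℝ) = if i' = i then ⟪φB i', x⟫ else 0 := by
      intro i' _
      rw [real_inner_smul_right, hBo]
      by_cases h : i' = i
      · subst h; simp
      · rw [if_neg (fun hh => h hh.symm), if_neg h]; ring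
    rw [Finset.sum_congr rfl h, Finset.sum_ite_eq' S i (fun i' => (⟪φB i', x⟫ : ℝ)), if_pos hi]
  have hPP : ∀ x : V, ⟪P x, P x⟫ = ∑ i ∈ S, ⟪φB i, x⟫ ^ 2 := by
    intro x
    nth_rewrite 1 [hPapply x]
    rw [sum_inner]
    apply Finset.sum_congr rfl
    intro i hi
    rw [real_inner_smul_left, hiP x i hi]
    ring
  have hsub : ∀ x : V, ⟪x - P x, x - P x⟫ = ⟪x, x⟫ - ∑ i ∈ S, ⟪φB i, x⟫ ^ 2 := by
    intro x
    have h1 := hinnerP x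
    have h2 := hPP x
    have h3 : ⟪P x, x⟫ = ∑ i ∈ S, ⟪φB i, x⟫ ^ 2 := by rw [real_inner_comm]; exact h1
    have e : ⟪x - P x, x - P x⟫ = ⟪x, x⟫ - ⟪x, P x⟫ - ⟪P x, x⟫ + ⟪P x, P x⟫ := by
      rw [inner_sub_left, inner_sub_right, inner_sub_right]
      ring
    rw [e, h1, h2, h3]
    ring
  -- frobInner computations
  have hfrobA : frobInner (A - P ∘ₗ A) (A - P ∘ₗ A) = ∑ m, σA m ^ 2 * (1 - tA m) := by
    rw [frobInner_self_eq bA]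
    apply Finset.sum_congr rfl
    intro m _
    simp only [LinearMap.sub_apply, LinearMap.comp_apply, hAlam, map_smul]
    rw [← smul_sub, real_inner_smul_left, real_inner_smul_right, hsub,
      real_inner_self_eq_norm_sq, hφA.1 m]
    rw [htA]
    ring
  have hfrobB : frobInner (B - P ∘ₗ B) (B - P ∘ₗ B)
      = ∑ m ∈ univ.filter (fun m : Fin j => N ≤ (m : ℕ)), σB m ^ 2 := by
    rw [frobInner_self_eq bB, Finset.sum_filter]
    apply Finset.sum_congr rfl
    intro m _
    simp only [LinearMap.sub_apply, LinearMap.comp_apply, hBlam, map_smul]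
    rw [← smul_sub, real_inner_smul_left, real_inner_smul_right, hsub,
      real_inner_self_eq_norm_sq, hφB.1 m]
    have hmem : m ∈ S ↔ (m : ℕ) < N := by simp [hS]
    by_cases hm : (m : ℕ) < N
    · rw [if_neg (by omega)]
      have : ∑ i ∈ S, ⟪φB i, φB m⟫ ^ 2 = 1 := by
        have h : ∀ i ∈ S, (⟪φB i, φB m⟫ : ℝ) ^ 2 = if i = m then 1 else 0 := by
          intro i _
          rw [hBo]
          split_ifs <;> norm_num
        rw [Finset.sum_congr rfl h, Finset.sum_ite_eq' S m (fun _ => (1 : ℝ)),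
          if_pos (hmem.mpr hm)]
      rw [this]
      ring
    · rw [if_pos (by omega)]
      have : ∑ i ∈ S, ⟪φB i, φB m⟫ ^ 2 = 0 := by
        apply Finset.sum_eq_zero
        intro i hi
        have hiS : (i : ℕ) < N := by simpa [hS] using hi
        rw [hBo, if_neg (by intro h; subst h; omega)]
        norm_num
      rw [this]
      ring
  -- weight bounds
  have ht0 : ∀ m, 0 ≤ tA m := by
    intro m
    apply Finset.sum_nonneg
    intro i _
    positivity
  have ht1 : ∀ m, tA m ≤ 1 := by
    intro m
    have := hφB.sum_inner_products_le (φA m) (s := S)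
    rw [htA]
    calc ∑ i ∈ S, ⟪φB i, φA m⟫ ^ 2 = ∑ i ∈ S, ‖(⟪φB i, φA m⟫ : ℝ)‖ ^ 2 := by
          apply Finset.sum_congr rfl
          intro i _
          rw [Real.norm_eq_abs, sq_abs]
      _ ≤ ‖φA m‖ ^ 2 := this
      _ = 1 := by rw [hφA.1 m]; norm_num
  have hts : ∑ m, tA m ≤ (N : ℝ) := by
    rw [htA]
    rw [Finset.sum_comm]
    calc ∑ i ∈ S, ∑ m, ⟪φB i, φA m⟫ ^ 2 ≤ ∑ i ∈ S, (1 : ℝ) := by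
          apply Finset.sum_le_sum
          intro i _
          have := hφA.sum_inner_products_le (φB i) (s := (univ : Finset (Fin k)))
          calc ∑ m, ⟪φB i, φA m⟫ ^ 2 = ∑ m, ‖(⟪φA m, φB i⟫ : ℝ)‖ ^ 2 := by
                apply Finset.sum_congr rfl
                intro m _
                rw [Real.norm_eq_abs, sq_abs, real_inner_comm]
            _ ≤ ‖φB i‖ ^ 2 := this
            _ = 1 := by rw [hφB.1 i]; norm_num
      _ = S.card := by rw [Finset.sum_const, nsmul_eq_mul, mul_one]
      _ ≤ (N : ℝ) := by exact_mod_cast card_filter_lt_le j N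
  -- combine
  have hcA : Antitone (fun m => σA m ^ 2) :=
    fun a b hab => pow_le_pow_left₀ (hσA0 b) (hσAa hab) 2
  have hc0A : ∀ m, 0 ≤ σA m ^ 2 := fun m => sq_nonneg _
  calc ∑ m ∈ univ.filter (fun m : Fin k => N ≤ (m : ℕ)), σA m ^ 2
      ≤ ∑ m, σA m ^ 2 * (1 - tA m) := weight_sum_le _ tA hcA hc0A ht0 ht1 hts
    _ = frobInner (A - P ∘ₗ A) (A - P ∘ₗ A) := hfrobA.symm
    _ ≤ frobInner (B - P ∘ₗ B) (B - P ∘ₗ B) := hdom P hP2 hPsa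
    _ = ∑ m ∈ univ.filter (fun m : Fin j => N ≤ (m : ℕ)), σB m ^ 2 := hfrobB

/-- truncation-rank comparison: if for every orthogonal projection `P`,
`‖(1−P)∘A‖_HS² ≤ ‖(1−P)∘B‖_HS²`, then for all `ε > 0` the minimal truncation rank achieving
squared error `ε²` for `A` is at most that for `B`. -/
theorem truncation_rank_comparison
    {V : Type*} [NormedAddCommGroup V] [InnerProductSpace ℝ V] [FiniteDimensional ℝ V]
    {k j : ℕ}
    (A : EuclideanSpace ℝ (Fin k) →ₗ[ℝ] V)
    (B : EuclideanSpace ℝ (Fin j) →ₗ[ℝ] V)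
    (σA : Fin k → ℝ) (φA : Fin k → V) (lamA : Fin k → EuclideanSpace ℝ (Fin k))
    (hσAa : Antitone σA) (hσA0 : ∀ m, 0 ≤ σA m)
    (hφA : Orthonormal ℝ φA) (hlamA : Orthonormal ℝ lamA)
    (hA : ∀ x, A x = ∑ m, (σA m * ⟪lamA m, x⟫) • φA m)
    (σB : Fin j → ℝ) (φB : Fin j → V) (lamB : Fin j → EuclideanSpace ℝ (Fin j))
    (hσBa : Antitone σB) (hσB0 : ∀ m, 0 ≤ σB m)
    (hφB : Orthonormal ℝ φB) (hlamB : Orthonormal ℝ lamB)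
    (hB : ∀ x, B x = ∑ m, (σB m * ⟪lamB m, x⟫) • φB m)
    (hdom : ∀ P : V →ₗ[ℝ] V, P ∘ₗ P = P → LinearMap.adjoint P = P →
      frobInner (A - P ∘ₗ A) (A - P ∘ₗ A) ≤ frobInner (B - P ∘ₗ B) (B - P ∘ₗ B)) :
    ∀ ε : ℝ, 0 < ε →
      sInf {n : ℕ | ∑ m ∈ univ.filter (fun m : Fin k => n ≤ (m : ℕ)), σA m ^ 2 ≤ ε ^ 2}
        ≤ sInf {n : ℕ | ∑ m ∈ univ.filter (fun m : Fin j => n ≤ (m : ℕ)), σB m ^ 2 ≤ ε ^ 2} := by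
  intro ε hε
  have key := tail_compare A B σA φA lamA hσAa hσA0 hφA hlamA hA σB φB lamB hσB0 hφB hlamB hB hdom
  have hjmem : j ∈ {n : ℕ | ∑ m ∈ univ.filter (fun m : Fin j => n ≤ (m : ℕ)), σB m ^ 2 ≤ ε ^ 2} := by
    have hempty : univ.filter (fun m : Fin j => j ≤ (m : ℕ)) = ∅ := by
      apply Finset.filter_false_of_mem
      intro m _
      have := m.isLt
      omega
    simp only [Set.mem_setOf_eq, hempty, Finset.sum_empty]
    positivity
  have hmem := Nat.sInf_mem (⟨j, hjmem⟩ :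
    Set.Nonempty {n : ℕ | ∑ m ∈ univ.filter (fun m : Fin j => n ≤ (m : ℕ)), σB m ^ 2 ≤ ε ^ 2})
  apply Nat.sInf_le
  exact le_trans (key _) hmem
end
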